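/- arXiv:2210.02919 — 3 statements merged into one kernel-verified Lean document; each statement's English description precedes it below -/
import Mathlib

section
/- Suppose each f_ij is convex and continuously differentiable with ∇f_ij Lipschitz of constant l_ij (Assumption 1); the pseudo-gradient P is strongly monotone with constant μ > 0 (Assumption 2); and each L_i is the Laplacian of a connected undirected graph on the n_i agents of coalition i (Assumption 3). Then a vector x* ∈ Ω is a Nash equilibrium of the resource allocation game if and only if L_i · (∂f_i/∂x_i)(x*) = 0 for every coalition i ∈ {1,…,N}. -/
noncomputable section
open Matrix
open scoped RealInnerProductSpace

/-- The collective decision space: coalition `i` has block `ℝ^{n i}`;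
the whole space carries the Euclidean (`L²`) norm. -/
abbrev Vec (N : ℕ) (n : Fin N → ℕ) := PiLp 2 (fun i : Fin N => EuclideanSpace ℝ (Fin (n i)))

variable {N : ℕ} {n : Fin N → ℕ}

/-- Coalition-level objective `f_i = ∑_j f_ij`. -/
def coalObj (f : ∀ i : Fin N, Fin (n i) → Vec N n → ℝ) (i : Fin N) (x : Vec N n) : ℝ :=
  ∑ j, f i j x

/-- The gradient of `f_i` with respect to its own block `x_i`, i.e. `∂f_i/∂x_i`. -/
def blockGrad (f : ∀ i : Fin N, Fin (n i) → Vec N n → ℝ) (i : Fin N) (x : Vec N n) :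
    EuclideanSpace ℝ (Fin (n i)) :=
  WithLp.toLp 2 (fun j => gradient (coalObj f i) x i j)

/-- The pseudo-gradient `P(x) = (∂f_1/∂x_1(x), …, ∂f_N/∂x_N(x))`. -/
def pseudoGrad (f : ∀ i : Fin N, Fin (n i) → Vec N n → ℝ) (x : Vec N n) : Vec N n :=
  WithLp.toLp 2 (fun i => blockGrad f i x)

/-- Nash equilibrium of the resource allocation game: `x ∈ Ω` and no coalition can
decrease its objective by unilaterally changing its own (feasible) block. -/
def IsNE (f : ∀ i : Fin N, Fin (n i) → Vec N n → ℝ) (R : Fin N → ℝ) (x : Vec N n) : Prop :=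
  (∀ i, ∑ j, x i j = R i) ∧
  ∀ (i : Fin N) (y : EuclideanSpace ℝ (Fin (n i))), (∑ j, y j = R i) →
    coalObj f i x ≤ coalObj f i (WithLp.toLp 2 (Function.update (WithLp.ofLp x) i y))

/-- `L` is the Laplacian matrix of a connected undirected graph. -/
def IsConnLap {m : ℕ} (L : Matrix (Fin m) (Fin m) ℝ) : Prop :=
  ∃ (G : SimpleGraph (Fin m)) (_ : DecidableRel G.Adj), G.Connected ∧ L = G.lapMatrix ℝ

/-!
With the other blocks frozen, coalition `i` minimizes the convex function `f_i` over the
hyperplane `x_i* + {w | ∑ w = 0}`. For a convex differentiable function this happens exactly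
when the gradient is orthogonal to every direction of the hyperplane: testing along a line gives
a vanishing derivative in one direction, and the first-order inequality
`f(x + v) ≥ f(x) + ⟪∇f x, v⟫` gives the other. Orthogonality to all zero-sum vectors means that
`∂f_i/∂x_i(x*)` is a constant vector, and since `L_i` is the Laplacian of a connected graph, its
kernel consists of precisely the constant vectors.
-/

open Set

section FirstOrder

variable {E : Type*} [NormedAddCommGroup E] [InnerProductSpace ℝ E] [CompleteSpace E]
  {g : E → ℝ} {G x : E}

theorem HasGradientAt.hasDerivAt_comp_add_smul (hG : HasGradientAt g G x) (v : E) :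
    HasDerivAt (fun t : ℝ => g (x + t • v)) ⟪G, v⟫ 0 := by
  have hline : HasDerivAt (fun t : ℝ => x + t • v) v 0 := by
    simpa using ((hasDerivAt_id (0 : ℝ)).smul_const v).const_add x
  have hG' : HasFDerivAt g (InnerProductSpace.toDual ℝ E G) (x + (0 : ℝ) • v) := by
    simpa using hG.hasFDerivAt
  simpa [Function.comp_def] using hG'.comp_hasDerivAt 0 hline

theorem HasGradientAt.inner_eq_zero_of_forall_le (hG : HasGradientAt g G x) {v : E}
    (hmin : ∀ t : ℝ, g x ≤ g (x + t • v)) : ⟪G, v⟫ = 0 :=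
  IsLocalMin.hasDerivAt_eq_zero (f := fun t : ℝ => g (x + t • v))
    (Filter.Eventually.of_forall fun t => by simpa using hmin t)
    (hG.hasDerivAt_comp_add_smul v)

theorem ConvexOn.add_inner_le_of_hasGradientAt (hg : ConvexOn ℝ univ g)
    (hG : HasGradientAt g G x) (v : E) : g x + ⟪G, v⟫ ≤ g (x + v) := by
  have hline : ConvexOn ℝ univ fun t : ℝ => g (x + t • v) := by
    have hcomp : g ∘ AffineMap.lineMap x (x + v) = fun t : ℝ => g (x + t • v) := by
      funext t
      simp only [Function.comp_apply, AffineMap.lineMap_apply_module]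
      congr 1
      module
    simpa [hcomp] using hg.comp_affineMap (AffineMap.lineMap x (x + v))
  have hslope := hline.le_slope_of_hasDerivAt (mem_univ 0) (mem_univ 1) zero_lt_one
    (hG.hasDerivAt_comp_add_smul v)
  rw [slope_def_field] at hslope
  simp only [zero_smul, add_zero, one_smul, sub_zero, div_one] at hslope
  linarith

theorem ConvexOn.forall_le_add_iff_forall_inner_eq_zero (hg : ConvexOn ℝ univ g)
    (hG : HasGradientAt g G x) {D : Set E} (hD : ∀ v ∈ D, ∀ t : ℝ, t • v ∈ D) :
    (∀ v ∈ D, g x ≤ g (x + v)) ↔ ∀ v ∈ D, ⟪G, v⟫ = 0 :=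
  ⟨fun hmin v hv => hG.inner_eq_zero_of_forall_le fun t => hmin _ (hD v hv t),
    fun horth v hv => by simpa [horth v hv] using hg.add_inner_le_of_hasGradientAt hG v⟩

end FirstOrder

theorem convexOn_sum {𝕜 E ι : Type*} [Semiring 𝕜] [PartialOrder 𝕜] [IsOrderedRing 𝕜]
    [AddCommMonoid E] [Module 𝕜 E] {t : Set E} (ht : Convex 𝕜 t) (s : Finset ι)
    {f : ι → E → 𝕜} (hf : ∀ i ∈ s, ConvexOn 𝕜 t (f i)) : ConvexOn 𝕜 t (∑ i ∈ s, f i) :=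
  Finset.sum_induction f (ConvexOn 𝕜 t) (fun _ _ => ConvexOn.add) (convexOn_const 0 ht) hf

namespace PiLp

variable {ι : Type*} [DecidableEq ι]

theorem toLp_update_eq_add_single {β : ι → Type*} [∀ i, AddCommGroup (β i)] (p : ENNReal)
    (x : PiLp p β) (i : ι) (y : β i) :
    WithLp.toLp p (Function.update (WithLp.ofLp x) i y) = x + single p i (y - x i) := by
  refine WithLp.ofLp_injective p (funext fun k => ?_)
  rcases eq_or_ne k i with rfl | hk
  · simp only [Function.update_self, WithLp.ofLp_add, Pi.add_apply, ofLp_single,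
      Pi.single_eq_same, add_sub_cancel]
  · simp only [Function.update_of_ne hk, WithLp.ofLp_add, Pi.add_apply, ofLp_single,
      Pi.single_eq_of_ne hk, add_zero]

theorem single_smul {K : Type*} [Monoid K] {β : ι → Type*} [∀ i, AddMonoid (β i)]
    [∀ i, DistribMulAction K (β i)] (p : ENNReal) (i : ι) (c : K) (a : β i) :
    single p i (c • a) = c • single p i a := by
  rw [← toLp_single, Pi.single_smul, WithLp.toLp_smul, toLp_single]

theorem inner_single_right [Fintype ι] {β : ι → Type*} [∀ i, NormedAddCommGroup (β i)]
    [∀ i, InnerProductSpace ℝ (β i)] (x : PiLp 2 β) (i : ι) (a : β i) :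
    ⟪x, single 2 i a⟫ = ⟪x i, a⟫ := by
  rw [PiLp.inner_apply, Finset.sum_eq_single i (fun k _ hk => by simp [hk]) (by simp)]
  simp

end PiLp

theorem EuclideanSpace.forall_inner_eq_zero_iff_forall_eq {ι : Type*} [Fintype ι] [DecidableEq ι]
    (b : EuclideanSpace ℝ ι) :
    (∀ w : EuclideanSpace ℝ ι, ∑ j, w j = 0 → ⟪b, w⟫ = 0) ↔ ∀ j k, b j = b k := by
  constructor
  · intro h j k
    have := h (EuclideanSpace.single j 1 - EuclideanSpace.single k 1) (by simp)
    simpa [inner_sub_right, EuclideanSpace.inner_single_right, sub_eq_zero] using this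
  · intro h w hw
    rcases isEmpty_or_nonempty ι with _ | ⟨⟨j₀⟩⟩
    · simp [PiLp.inner_apply]
    · simp [PiLp.inner_apply, h _ j₀, ← Finset.sum_mul, hw]

theorem IsConnLap.mulVec_eq_zero_iff {m : ℕ} {L : Matrix (Fin m) (Fin m) ℝ} (hL : IsConnLap L)
    (b : Fin m → ℝ) : L *ᵥ b = 0 ↔ ∀ j k, b j = b k := by
  obtain ⟨G, _, hconn, rfl⟩ := hL
  rw [SimpleGraph.lapMatrix_mulVec_eq_zero_iff_forall_reachable]
  exact ⟨fun h j k => h j k (hconn.preconnected j k), fun h j k _ => h j k⟩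

section Game

variable (f : ∀ i : Fin N, Fin (n i) → Vec N n → ℝ)

theorem coalObj_eq_sum (i : Fin N) : coalObj f i = ∑ j, f i j := by
  funext x
  simp [coalObj]

theorem blockGrad_eq (i : Fin N) (x : Vec N n) :
    blockGrad f i x = gradient (coalObj f i) x i := rfl

theorem isNE_iff_forall_zero_sum {R : Fin N → ℝ} {x : Vec N n} (hx : ∀ i, ∑ j, x i j = R i) :
    IsNE f R x ↔ ∀ i (w : EuclideanSpace ℝ (Fin (n i))), ∑ j, w j = 0 →
      coalObj f i x ≤ coalObj f i (x + PiLp.single 2 i w) := by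
  simp only [IsNE, hx, implies_true, true_and, PiLp.toLp_update_eq_add_single]
  refine forall_congr' fun i => ⟨fun h w hw => ?_, fun h y hy => h _ ?_⟩
  · simpa using h (x i + w) (by simp [Finset.sum_add_distrib, hx, hw])
  · simp [Finset.sum_sub_distrib, hx, hy]

end Game

theorem statement0_general
    (f : ∀ i : Fin N, Fin (n i) → Vec N n → ℝ)
    (R : Fin N → ℝ)
    (L : ∀ i : Fin N, Matrix (Fin (n i)) (Fin (n i)) ℝ)
    -- Assumption 1: convexity, continuous differentiability, Lipschitz gradients
    (hconv : ∀ i j, ConvexOn ℝ Set.univ (f i j))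
    (hdiff : ∀ i j, ContDiff ℝ 1 (f i j))
    -- Assumption 3: each `L i` is the Laplacian of a connected undirected graph
    (hLap : ∀ i, IsConnLap (L i))
    (xstar : Vec N n) (hfeas : ∀ i, ∑ j, xstar i j = R i) :
    IsNE f R xstar ↔ ∀ i, (L i).mulVec (blockGrad f i xstar) = 0 := by
  rw [isNE_iff_forall_zero_sum f hfeas]
  refine forall_congr' fun i => ?_
  have hconvex : ConvexOn ℝ univ (coalObj f i) := by
    rw [coalObj_eq_sum]
    exact convexOn_sum convex_univ _ fun j _ => hconv i j
  have hgrad : HasGradientAt (coalObj f i) (gradient (coalObj f i) xstar) xstar :=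
    ((ContDiff.sum fun j _ => hdiff i j).differentiable one_ne_zero xstar).hasGradientAt
  have hopt := hconvex.forall_le_add_iff_forall_inner_eq_zero hgrad
    (D := PiLp.single 2 i '' {w | ∑ j, w j = 0})
    (by
      rintro _ ⟨w, hw, rfl⟩ t
      refine ⟨t • w, ?_, ?_⟩
      · simp [← Finset.mul_sum, show ∑ j, w j = 0 from hw]
      · exact PiLp.single_smul _ _ _ _)
  simp only [forall_mem_image, mem_ofPred_eq, PiLp.inner_single_right] at hopt
  rw [hopt, (hLap i).mulVec_eq_zero_iff, blockGrad_eq,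
    ← EuclideanSpace.forall_inner_eq_zero_iff_forall_eq]

/-- Lemma 1 of the paper: under Assumptions 1–3, a feasible point `x*`
is a Nash equilibrium iff `L_i · (∂f_i/∂x_i)(x*) = 0` for every coalition `i`. -/
theorem statement0
    (f : ∀ i : Fin N, Fin (n i) → Vec N n → ℝ)
    (l : ∀ i : Fin N, Fin (n i) → ℝ) (μ : ℝ) (R : Fin N → ℝ)
    (L : ∀ i : Fin N, Matrix (Fin (n i)) (Fin (n i)) ℝ)
    -- Assumption 1: convexity, continuous differentiability, Lipschitz gradients
    (hconv : ∀ i j, ConvexOn ℝ Set.univ (f i j))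
    (hdiff : ∀ i j, ContDiff ℝ 1 (f i j))
    (hlip : ∀ i j (a b : Vec N n),
      ‖gradient (f i j) a - gradient (f i j) b‖ ≤ l i j * ‖a - b‖)
    -- Assumption 2: strictly (strongly) monotone pseudo-gradient
    (hμ : 0 < μ)
    (hmono : ∀ a b : Vec N n,
      μ * ‖a - b‖ ^ 2 ≤ ⟪a - b, pseudoGrad f a - pseudoGrad f b⟫)
    -- Assumption 3: each `L i` is the Laplacian of a connected undirected graph
    (hLap : ∀ i, IsConnLap (L i))
    (xstar : Vec N n) (hfeas : ∀ i, ∑ j, xstar i j = R i) :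
    IsNE f R xstar ↔ ∀ i, (L i).mulVec (blockGrad f i xstar) = 0 :=
  statement0_general f R L hconv hdiff hLap xstar hfeas
end
end

section
/- Let n ∈ ℕ⁺, let M ∈ ℝ^{n²×n²}, and let W_M ∈ ℝ^{n²×n²} be a symmetric positive definite matrix satisfying Mᵀ W_M M − W_M = −I_{n²}. Suppose sequences e(k) ∈ ℝ^{n²} and v(k) ∈ ℝ^{n} satisfy e(k+1) = M e(k) + 1_n ⊗ v(k) for all k ∈ ℕ. Then for every k ∈ ℕ: e(k+1)ᵀ W_M e(k+1) − e(k)ᵀ W_M e(k) ≤ −(1/2)‖e(k)‖² + b‖v(k)‖², where b = n(2‖Mᵀ W_M‖² + ‖W_M‖). (This is Lemma 2 of the paper: with n = n_sum, e(k) the consensus-estimation error e_ξ(k) = ξ(k) − 1_{n_sum} ⊗ x(k), and v(k) = α L̂² P̆(ξ(k)), it gives V_ξ(k+1) − V_ξ(k) ≤ −½‖e_ξ(k)‖² + α² b ‖L̂² P̆(ξ(k))‖² for V_ξ(k) = e_ξ(k)ᵀ W_M e_ξ(k).) -/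
noncomputable section
open Matrix

/-- The spectral (L² operator) norm of a real matrix. -/
def specNorm {m p : Type*} [Fintype m] [Fintype p] [DecidableEq p] (A : Matrix m p ℝ) : ℝ :=
  ‖LinearMap.toContinuousLinearMap (Matrix.toEuclideanLin A)‖

section

variable {R ι : Type*} [CommRing R] [Fintype ι]

theorem Matrix.IsSymm.dotProduct_mulVec_add_mulVec_add {W : Matrix ι ι R} (hW : W.IsSymm)
    (M : Matrix ι ι R) (x u : ι → R) :
    (M *ᵥ x + u) ⬝ᵥ W *ᵥ (M *ᵥ x + u)
      = x ⬝ᵥ (Mᵀ * W * M) *ᵥ x + 2 * (x ⬝ᵥ (Mᵀ * W) *ᵥ u) + u ⬝ᵥ W *ᵥ u := by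
  have transpose_left (B : Matrix ι ι R) (a b : ι → R) : B *ᵥ a ⬝ᵥ b = a ⬝ᵥ Bᵀ *ᵥ b := by
    rw [dotProduct_mulVec, vecMul_transpose]
  have hcross : u ⬝ᵥ (W * M) *ᵥ x = x ⬝ᵥ (Mᵀ * W) *ᵥ u := by
    rw [dotProduct_comm, transpose_left, transpose_mul, hW.eq]
  simp only [mulVec_add, dotProduct_add, add_dotProduct, transpose_left M, mulVec_mulVec,
    ← Matrix.mul_assoc, hcross]
  ring

end

section

variable {ι : Type*} [Fintype ι] [DecidableEq ι]

theorem norm_toLp_mulVec_le_specNorm {m : Type*} [Fintype m] (A : Matrix m ι ℝ)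
    (x : EuclideanSpace ℝ ι) : ‖WithLp.toLp 2 (A *ᵥ x.ofLp)‖ ≤ specNorm A * ‖x‖ :=
  (LinearMap.toContinuousLinearMap (Matrix.toEuclideanLin A)).le_opNorm x

theorem dotProduct_mulVec_le_specNorm {m : Type*} [Fintype m] (A : Matrix m ι ℝ)
    (x : EuclideanSpace ℝ m) (y : EuclideanSpace ℝ ι) :
    x.ofLp ⬝ᵥ A *ᵥ y.ofLp ≤ specNorm A * ‖x‖ * ‖y‖ :=
  calc x.ofLp ⬝ᵥ A *ᵥ y.ofLp = inner ℝ (WithLp.toLp 2 (A *ᵥ y.ofLp)) x := by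
        rw [EuclideanSpace.inner_eq_star_dotProduct, star_trivial]
    _ ≤ ‖WithLp.toLp 2 (A *ᵥ y.ofLp)‖ * ‖x‖ := real_inner_le_norm _ _
    _ ≤ specNorm A * ‖y‖ * ‖x‖ := by
        gcongr; exact norm_toLp_mulVec_le_specNorm A y
    _ = specNorm A * ‖x‖ * ‖y‖ := by ring

/-- `Mᵀ W M - W = -1` turns the quadratic part into `-‖x‖²`, and the cross term
`2 xᵀ (Mᵀ W) u` is absorbed by AM-GM into `½‖x‖² + 2‖Mᵀ W‖²‖u‖²`. -/
theorem lyapunov_difference_le {M W : Matrix ι ι ℝ} (hW : W.IsSymm)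
    (hLyap : Mᵀ * W * M - W = -1) (x u : EuclideanSpace ℝ ι) :
    (M *ᵥ x.ofLp + u.ofLp) ⬝ᵥ W *ᵥ (M *ᵥ x.ofLp + u.ofLp) - x.ofLp ⬝ᵥ W *ᵥ x.ofLp
      ≤ -(1 / 2) * ‖x‖ ^ 2 + (2 * specNorm (Mᵀ * W) ^ 2 + specNorm W) * ‖u‖ ^ 2 := by
  have hquad : x.ofLp ⬝ᵥ (Mᵀ * W * M) *ᵥ x.ofLp - x.ofLp ⬝ᵥ W *ᵥ x.ofLp = -‖x‖ ^ 2 := by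
    rw [← dotProduct_sub, ← sub_mulVec, hLyap, neg_mulVec, one_mulVec, dotProduct_neg,
      ← real_inner_self_eq_norm_sq, EuclideanSpace.inner_eq_star_dotProduct, star_trivial]
  have hcross := dotProduct_mulVec_le_specNorm (Mᵀ * W) x u
  have hdiag := dotProduct_mulVec_le_specNorm W u u
  have hamgm := two_mul_le_add_sq ‖x‖ (2 * specNorm (Mᵀ * W) * ‖u‖)
  rw [hW.dotProduct_mulVec_add_mulVec_add]
  linarith

end

/-- The stacked vector `1_κ ⊗ v`. -/
def onesKron (κ : Type*) {ι : Type*} (v : EuclideanSpace ℝ ι) : EuclideanSpace ℝ (κ × ι) :=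
  WithLp.toLp 2 fun p => v p.2

theorem norm_onesKron_sq (κ : Type*) {ι : Type*} [Fintype κ] [Fintype ι]
    (v : EuclideanSpace ℝ ι) :
    ‖onesKron κ v‖ ^ 2 = Fintype.card κ * ‖v‖ ^ 2 := by
  simp only [EuclideanSpace.norm_sq_eq, onesKron, Fintype.sum_prod_type, Finset.sum_const,
    Finset.card_univ, nsmul_eq_mul]

theorem statement5_general (n : ℕ)
    (M WM : Matrix (Fin n × Fin n) (Fin n × Fin n) ℝ)
    (hWM : WM.PosDef)
    (hLyap : Mᵀ * WM * M - WM = -1)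
    (e : ℕ → EuclideanSpace ℝ (Fin n × Fin n))
    (v : ℕ → EuclideanSpace ℝ (Fin n))
    (hrec : ∀ (k : ℕ) (up : Fin n × Fin n), e (k + 1) up = M.mulVec (e k) up + v k up.2)
    (k : ℕ) :
    e (k + 1) ⬝ᵥ WM.mulVec (e (k + 1)) - e k ⬝ᵥ WM.mulVec (e k)
      ≤ -(1 / 2) * ‖e k‖ ^ 2
        + ((n : ℝ) * (2 * specNorm (Mᵀ * WM) ^ 2 + specNorm WM)) * ‖v k‖ ^ 2 := by
  have hstep : (e (k + 1)).ofLp = M *ᵥ (e k).ofLp + (onesKron (Fin n) (v k)).ofLp :=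
    funext (hrec k)
  have hsymm : WM.IsSymm := isHermitian_iff_isSymm.mp hWM.isHermitian
  calc _ ≤ -(1 / 2) * ‖e k‖ ^ 2
        + (2 * specNorm (Mᵀ * WM) ^ 2 + specNorm WM) * ‖onesKron (Fin n) (v k)‖ ^ 2 := by
        rw [hstep]; exact lyapunov_difference_le hsymm hLyap (e k) _
    _ = _ := by rw [norm_onesKron_sq, Fintype.card_fin]; ring

/-- Lemma 2 of the paper: for a Lyapunov pair `(M, W_M)` with
`Mᵀ W_M M − W_M = −I` and the recursion `e(k+1) = M e(k) + 1_n ⊗ v(k)`, the quadratic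
form `V(k) = e(k)ᵀ W_M e(k)` satisfies
`V(k+1) − V(k) ≤ −(1/2)‖e(k)‖² + n(2‖Mᵀ W_M‖² + ‖W_M‖)‖v(k)‖²`. -/
theorem statement5 (n : ℕ) (hn : 0 < n)
    (M WM : Matrix (Fin n × Fin n) (Fin n × Fin n) ℝ)
    (hWM : WM.PosDef)
    (hLyap : Mᵀ * WM * M - WM = -1)
    (e : ℕ → EuclideanSpace ℝ (Fin n × Fin n))
    (v : ℕ → EuclideanSpace ℝ (Fin n))
    (hrec : ∀ (k : ℕ) (up : Fin n × Fin n), e (k + 1) up = M.mulVec (e k) up + v k up.2)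
    (k : ℕ) :
    e (k + 1) ⬝ᵥ WM.mulVec (e (k + 1)) - e k ⬝ᵥ WM.mulVec (e k)
      ≤ -(1 / 2) * ‖e k‖ ^ 2
        + ((n : ℝ) * (2 * specNorm (Mᵀ * WM) ^ 2 + specNorm WM)) * ‖v k‖ ^ 2 :=
  statement5_general n M WM hWM hLyap e v hrec k
end
end

section
/- Let G be a connected undirected graph on n vertices and let C ∈ ℝ^{n×n} be a doubly stochastic matrix (nonnegative entries, every row sum and every column sum equal to 1) such that all diagonal entries of C are strictly positive and, for j ≠ m, the (j,m) entry of C is strictly positive if and only if {j,m} is an edge of G. Then C^k converges to (1/n)1_n 1_nᵀ as k → ∞; equivalently, the matrix C̄ = C − (1/n)1_n 1_nᵀ is a Schur matrix (its spectral radius is strictly less than 1), so C̄^k → 0. -/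
/-!
Positive diagonal entries let a walk idle at a vertex, so by connectivity every entry of `C ^ n`
is positive, say `≥ ε > 0`. A stochastic matrix whose entries are all `≥ ε` contracts the
oscillation `max x - min x` of a vector by the factor `1 - 2ε`, hence the oscillation of every
column of `C ^ k` tends to `0`; since the column sums are `1`, the columns tend to the constant
`1/n`. With `J = (1/n) 1 1ᵀ` we have `C J = J C = J² = J`, so `(C - J) ^ k = C ^ k - J → 0`,
and an eigenvector of `C - J` for an eigenvalue `z` then forces `z ^ k → 0`, i.e. `‖z‖ < 1`.
-/

open Filter Topology Finset Matrix

section Oscillation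

variable {ι : Type*} [Fintype ι] [Nonempty ι]

noncomputable def osc (x : ι → ℝ) : ℝ :=
  univ.sup' univ_nonempty x - univ.inf' univ_nonempty x

lemma sub_le_osc (x : ι → ℝ) (i j : ι) : x i - x j ≤ osc x :=
  sub_le_sub (le_sup' x (mem_univ i)) (inf'_le x (mem_univ j))

lemma osc_nonneg (x : ι → ℝ) : 0 ≤ osc x := by
  obtain ⟨i⟩ := ‹Nonempty ι›
  simpa using sub_le_osc x i i

lemma exists_osc_eq (x : ι → ℝ) : ∃ i j, osc x = x i - x j := by
  obtain ⟨i, -, hi⟩ := exists_mem_eq_sup' univ_nonempty x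
  obtain ⟨j, -, hj⟩ := exists_mem_eq_inf' univ_nonempty x
  exact ⟨i, j, by rw [osc, hi, hj]⟩

lemma abs_sub_le_osc_of_sum_eq (x : ι → ℝ) {a : ℝ} (hsum : ∑ i, x i = Fintype.card ι * a)
    (i : ι) : |x i - a| ≤ osc x := by
  have hconst : ∑ _ : ι, a = Fintype.card ι * a := by simp
  obtain ⟨j, -, hj⟩ := exists_le_of_sum_le univ_nonempty (hsum.trans hconst.symm).le
  obtain ⟨j', -, hj'⟩ := exists_le_of_sum_le univ_nonempty (hconst.trans hsum.symm).le
  rw [abs_sub_le_iff]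
  constructor <;> linarith [sub_le_osc x i j, sub_le_osc x j' i]

end Oscillation

lemma tendsto_zero_of_antitone_of_le_mul {g : ℕ → ℝ} (hg : Antitone g) (hg0 : ∀ k, 0 ≤ g k)
    {r : ℝ} (hr : r < 1) (N : ℕ) (hstep : ∀ k, g (k + N) ≤ r * g k) :
    Tendsto g atTop (𝓝 0) := by
  have hlim := tendsto_atTop_ciInf hg ⟨0, by rintro _ ⟨k, rfl⟩; exact hg0 k⟩
  have hL0 : 0 ≤ ⨅ k, g k := le_ciInf hg0
  have hLr : ⨅ k, g k ≤ r * ⨅ k, g k :=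
    le_of_tendsto_of_tendsto' (hlim.comp (tendsto_add_atTop_nat N)) (hlim.const_mul r) hstep
  rwa [show ⨅ k, g k = 0 by nlinarith] at hlim

section Contraction

variable {ι : Type*} [Fintype ι] [DecidableEq ι] {P : Matrix ι ι ℝ} {ε : ℝ}

lemma mulVec_apply_le_of_rowStochastic (hP : P ∈ rowStochastic ℝ ι)
    (hε : ∀ i j, ε ≤ P i j) {x : ι → ℝ} {b : ℝ} (hb : ∀ l, x l ≤ b) (i l₀ : ι) :
    (P *ᵥ x) i ≤ b - ε * (b - x l₀) := by
  have hdefect : b - (P *ᵥ x) i = ∑ l, P i l * (b - x l) := by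
    simp only [mulVec, dotProduct, mul_sub, sum_sub_distrib, ← sum_mul,
      sum_row_of_mem_rowStochastic hP, one_mul]
  have hsingle : P i l₀ * (b - x l₀) ≤ ∑ l, P i l * (b - x l) :=
    single_le_sum (fun l _ => mul_nonneg (nonneg_of_mem_rowStochastic hP (i := i) (j := l))
      (sub_nonneg.2 (hb l))) (mem_univ l₀)
  nlinarith [mul_le_mul_of_nonneg_right (hε i l₀) (sub_nonneg.2 (hb l₀))]

variable [Nonempty ι]

lemma osc_mulVec_le (hP : P ∈ rowStochastic ℝ ι) (hε : ∀ i j, ε ≤ P i j) (x : ι → ℝ) :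
    osc (P *ᵥ x) ≤ (1 - 2 * ε) * osc x := by
  obtain ⟨i, j, hij⟩ := exists_osc_eq (P *ᵥ x)
  obtain ⟨a, b, hab⟩ := exists_osc_eq x
  have hupper := mulVec_apply_le_of_rowStochastic hP hε (x := x) (b := x a)
    (fun l => by linarith [sub_le_osc x l b]) i b
  have hlower := mulVec_apply_le_of_rowStochastic hP hε (x := -x) (b := -x b)
    (fun l => by simp only [Pi.neg_apply]; linarith [sub_le_osc x a l]) j a
  simp only [mulVec_neg, Pi.neg_apply] at hlower
  rw [hij, hab]
  linarith

lemma tendsto_osc_pow_mulVec (hP : P ∈ rowStochastic ℝ ι) (hε : 0 < ε) (N : ℕ)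
    (hN : ∀ i j, ε ≤ (P ^ N) i j) (x : ι → ℝ) :
    Tendsto (fun k => osc ((P ^ k) *ᵥ x)) atTop (𝓝 0) := by
  refine tendsto_zero_of_antitone_of_le_mul (antitone_nat_of_succ_le fun k => ?_)
    (fun k => osc_nonneg _) (by linarith : 1 - 2 * ε < 1) N fun k => ?_
  · rw [pow_succ', ← mulVec_mulVec]
    simpa using osc_mulVec_le hP (fun i j => nonneg_of_mem_rowStochastic hP) (P ^ k *ᵥ x)
  · rw [add_comm, pow_add, ← mulVec_mulVec]
    exact osc_mulVec_le (pow_mem hP N) hN _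

end Contraction

section Averaging

variable {ι : Type*} [Fintype ι] [DecidableEq ι] {P : Matrix ι ι ℝ}

noncomputable def avgMatrix (ι : Type*) [Fintype ι] : Matrix ι ι ℝ :=
  of fun _ _ => 1 / Fintype.card ι

lemma mul_avgMatrix (hP : P ∈ rowStochastic ℝ ι) : P * avgMatrix ι = avgMatrix ι := by
  ext i j
  simp [avgMatrix, mul_apply, ← sum_mul, sum_row_of_mem_rowStochastic hP]

lemma avgMatrix_mul (hP : P ∈ colStochastic ℝ ι) : avgMatrix ι * P = avgMatrix ι := by
  ext i j
  simp [avgMatrix, mul_apply, ← mul_sum, sum_col_of_mem_colStochastic hP]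

lemma avgMatrix_mem_doublyStochastic [Nonempty ι] : avgMatrix ι ∈ doublyStochastic ℝ ι :=
  mem_doublyStochastic_iff_sum.2 ⟨fun _ _ => by simp [avgMatrix], fun _ => by simp [avgMatrix],
    fun _ => by simp [avgMatrix]⟩

lemma sub_avgMatrix_pow_succ [Nonempty ι] (hP : P ∈ doublyStochastic ℝ ι) (k : ℕ) :
    (P - avgMatrix ι) ^ (k + 1) = P ^ (k + 1) - avgMatrix ι := by
  obtain ⟨hProw, hPcol⟩ := mem_doublyStochastic_iff_mem_rowStochastic_and_mem_colStochastic.1 hP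
  have hJJ := mul_avgMatrix (mem_doublyStochastic_iff_mem_rowStochastic_and_mem_colStochastic.1
    (avgMatrix_mem_doublyStochastic (ι := ι))).1
  induction k with
  | zero => simp
  | succ k ih =>
    rw [pow_succ, ih, sub_mul, mul_sub, mul_sub, mul_avgMatrix (pow_mem hProw _),
      avgMatrix_mul hPcol, hJJ, ← pow_succ]
    abel

variable [Nonempty ι]

theorem tendsto_pow_avgMatrix_of_pos_pow (hP : P ∈ doublyStochastic ℝ ι) (N : ℕ)
    (hN : ∀ i j, 0 < (P ^ N) i j) : Tendsto (P ^ ·) atTop (𝓝 (avgMatrix ι)) := by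
  obtain ⟨⟨i₀, j₀⟩, hmin⟩ := Finite.exists_min fun p : ι × ι => (P ^ N) p.1 p.2
  have hProw := (mem_doublyStochastic_iff_mem_rowStochastic_and_mem_colStochastic.1 hP).1
  refine tendsto_pi_nhds.2 fun i => tendsto_pi_nhds.2 fun j => ?_
  have hosc := tendsto_osc_pow_mulVec hProw (hN i₀ j₀) N (fun i j => hmin (i, j)) (Pi.single j 1)
  have hcolumn : ∀ k, P ^ k *ᵥ Pi.single j 1 = fun i => (P ^ k) i j := fun k => by
    rw [mulVec_single_one]; rfl
  have hsum : ∀ k, ∑ i, (P ^ k) i j = Fintype.card ι * (1 / Fintype.card ι) := fun k => by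
    rw [sum_col_of_mem_doublyStochastic (pow_mem hP k), mul_one_div_cancel (by positivity)]
  rw [tendsto_iff_norm_sub_tendsto_zero]
  refine squeeze_zero (fun _ => norm_nonneg _) (fun k => ?_) hosc
  simpa [hcolumn, avgMatrix] using abs_sub_le_osc_of_sum_eq _ (hsum k) i

theorem tendsto_sub_avgMatrix_pow (hP : P ∈ doublyStochastic ℝ ι)
    (hlim : Tendsto (P ^ ·) atTop (𝓝 (avgMatrix ι))) :
    Tendsto ((P - avgMatrix ι) ^ ·) atTop (𝓝 0) := by
  rw [← tendsto_add_atTop_iff_nat 1]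
  simp only [sub_avgMatrix_pow_succ hP]
  simpa using ((tendsto_add_atTop_iff_nat 1).2 hlim).sub_const (avgMatrix ι)

end Averaging

theorem norm_lt_one_of_mem_spectrum_of_tendsto_pow {𝕜 ι : Type*} [NormedField 𝕜] [Fintype ι]
    [DecidableEq ι] {A : Matrix ι ι 𝕜} (hA : Tendsto (A ^ ·) atTop (𝓝 0)) {z : 𝕜}
    (hz : z ∈ spectrum 𝕜 A) : ‖z‖ < 1 := by
  rw [← spectrum_toLin'] at hz
  obtain ⟨v, hv⟩ := (Module.End.hasEigenvalue_iff_mem_spectrum.2 hz).exists_hasEigenvector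
  have hpow : ∀ k, A ^ k *ᵥ v = z ^ k • v := fun k => by
    rw [← hv.pow_apply k, ← toLin'_apply]
    exact congrArg (· v) (map_pow toLinAlgEquiv' A k)
  have hsmul : Tendsto (fun k => z ^ k • v) atTop (𝓝 0) := by
    have hcont : Continuous fun B : Matrix ι ι 𝕜 => B *ᵥ v :=
      continuous_id.matrix_mulVec continuous_const
    simpa [Function.comp_def, hpow] using (hcont.tendsto 0).comp hA
  have hv0 : 0 < ‖v‖ := norm_pos_iff.2 hv.2
  have hnorm : Tendsto (fun k => ‖z‖ ^ k) atTop (𝓝 0) := by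
    simpa [norm_smul, hv0.ne'] using hsmul.norm.div_const ‖v‖
  simpa using tendsto_pow_atTop_nhds_zero_iff.1 hnorm

lemma tendsto_map_ofReal_pow {ι : Type*} [Fintype ι] [DecidableEq ι] {A : Matrix ι ι ℝ}
    (hA : Tendsto (A ^ ·) atTop (𝓝 0)) :
    Tendsto (A.map Complex.ofReal ^ ·) atTop (𝓝 0) := by
  have hcont : Continuous fun B : Matrix ι ι ℝ => B.map Complex.ofReal :=
    continuous_id.matrix_map Complex.continuous_ofReal
  have hpow : ∀ k, A.map Complex.ofReal ^ k = (A ^ k).map Complex.ofReal :=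
    fun k => (map_pow Complex.ofRealHom.mapMatrix A k).symm
  simpa [Function.comp_def, hpow] using (hcont.tendsto 0).comp hA

section Graph

variable {ι : Type*} [Fintype ι] [DecidableEq ι] {M : Matrix ι ι ℝ} {G : SimpleGraph ι}

lemma pow_apply_pos_of_walk (hM : ∀ i j, 0 ≤ M i j) (hdiag : ∀ i, 0 < M i i)
    (hadj : ∀ i j, G.Adj i j → 0 < M i j) {i j : ι} (w : G.Walk i j) {k : ℕ}
    (hk : w.length ≤ k) : 0 < (M ^ k) i j := by
  induction k generalizing i with
  | zero =>
    obtain rfl := SimpleGraph.Walk.eq_of_length_eq_zero (Nat.le_zero.1 hk)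
    simp
  | succ k ih =>
    rw [pow_succ', mul_apply]
    refine sum_pos' (fun l _ => mul_nonneg (hM i l) (pow_apply_nonneg hM k l j)) ?_
    cases w with
    | nil => exact ⟨_, mem_univ _, mul_pos (hdiag _) (ih .nil (Nat.zero_le k))⟩
    | cons h w' =>
      exact ⟨_, mem_univ _, mul_pos (hadj _ _ h) (ih w' (by simpa using hk))⟩

lemma pow_card_apply_pos_of_connected (hM : ∀ i j, 0 ≤ M i j) (hdiag : ∀ i, 0 < M i i)
    (hadj : ∀ i j, G.Adj i j → 0 < M i j) (hG : G.Connected) (i j : ι) :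
    0 < (M ^ Fintype.card ι) i j := by
  obtain ⟨w⟩ := hG i j
  exact pow_apply_pos_of_walk hM hdiag hadj w.toPath w.toPath.2.length_lt.le

end Graph

theorem statement11_general (n : ℕ)
    (G : SimpleGraph (Fin n)) (hG : G.Connected)
    (C : Matrix (Fin n) (Fin n) ℝ)
    (hnonneg : ∀ u v, 0 ≤ C u v)
    (hrow : ∀ u, ∑ v, C u v = 1)
    (hcol : ∀ v, ∑ u, C u v = 1)
    (hdiagpos : ∀ u, 0 < C u u)
    (hoffdiag : ∀ u v, u ≠ v → (0 < C u v ↔ G.Adj u v)) :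
    Filter.Tendsto (fun k => C ^ k) Filter.atTop
      (nhds (Matrix.of fun _ _ => (1 : ℝ) / n)) ∧
    (∀ z ∈ spectrum ℂ
        ((C - Matrix.of fun _ _ => (1 : ℝ) / n).map Complex.ofReal),
      ‖z‖ < 1) ∧
    Filter.Tendsto (fun k => (C - Matrix.of fun _ _ => (1 : ℝ) / n) ^ k) Filter.atTop
      (nhds 0) := by
  have : Nonempty (Fin n) := hG.nonempty
  have hC : C ∈ doublyStochastic ℝ (Fin n) := mem_doublyStochastic_iff_sum.2 ⟨hnonneg, hrow, hcol⟩
  have hpos := pow_card_apply_pos_of_connected hnonneg hdiagpos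
    (fun u v h => (hoffdiag u v h.ne).2 h) hG
  have hJ : (of fun _ _ => (1 : ℝ) / n) = avgMatrix (Fin n) := by simp [avgMatrix]
  have hlim := tendsto_pow_avgMatrix_of_pos_pow hC _ hpos
  have hbar := tendsto_sub_avgMatrix_pow hC hlim
  rw [hJ]
  exact ⟨hlim, fun z hz => norm_lt_one_of_mem_spectrum_of_tendsto_pow
    (tendsto_map_ofReal_pow hbar) hz, hbar⟩

/-- a doubly stochastic matrix with positive diagonal whose off-diagonal
positivity pattern is a connected undirected graph satisfies `C^k → (1/n)·1 1ᵀ`;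
equivalently `C̄ = C − (1/n)·1 1ᵀ` is Schur, so `C̄^k → 0`. -/
theorem statement11 (n : ℕ) (hn : 0 < n)
    (G : SimpleGraph (Fin n)) (hG : G.Connected)
    (C : Matrix (Fin n) (Fin n) ℝ)
    (hnonneg : ∀ u v, 0 ≤ C u v)
    (hrow : ∀ u, ∑ v, C u v = 1)
    (hcol : ∀ v, ∑ u, C u v = 1)
    (hdiagpos : ∀ u, 0 < C u u)
    (hoffdiag : ∀ u v, u ≠ v → (0 < C u v ↔ G.Adj u v)) :
    Filter.Tendsto (fun k => C ^ k) Filter.atTop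
      (nhds (Matrix.of fun _ _ => (1 : ℝ) / n)) ∧
    (∀ z ∈ spectrum ℂ
        ((C - Matrix.of fun _ _ => (1 : ℝ) / n).map Complex.ofReal),
      ‖z‖ < 1) ∧
    Filter.Tendsto (fun k => (C - Matrix.of fun _ _ => (1 : ℝ) / n) ^ k) Filter.atTop
      (nhds 0) :=
  statement11_general n G hG C hnonneg hrow hcol hdiagpos hoffdiag
end
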